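/- Let X be a locally finite poset and K a field, and J = {α ∈ I(X,K) : α(x,x) = 0 for all x}. Define J^(0) = J and J^(n+1) = [J^(n), J^(n)]·I(X,K). Then J^(n) ⊆ Z_{2^n} for all n ≥ 0, where Z_k = {α : α(x,y) = 0 whenever l(x,y) ≤ k - 1}. -/

import Mathlib

open IncidenceAlgebra

variable {K : Type*} [Field K] {X : Type*} [PartialOrder X] [LocallyFiniteOrder X] [DecidableEq X]

/-- The length `l(x,y)` of the interval `[x,y]`: the supremum of `|C| - 1` over finite chains
`C ⊆ [x,y]`. -/
noncomputable def intervalLength (x y : X) : ℕ∞ := (Set.Icc x y).chainHeight (· < ·) - 1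

/-- `Z_k`: the set of elements `α` of the incidence algebra with `α x y = 0` whenever
`l(x,y) ≤ k - 1`. -/
def zSet (K : Type*) [Field K] (X : Type*) [PartialOrder X] [LocallyFiniteOrder X]
    [DecidableEq X] (k : ℕ) : Set (IncidenceAlgebra K X) :=
  {f | ∀ x y : X, x ≤ y → intervalLength x y ≤ (k : ℕ∞) - 1 → f x y = 0}


/-- The span of Lie brackets `[u,v] = u*v - v*u`, `u ∈ U`, `v ∈ V`. -/
def lieBracketSpan (U V : Submodule K (IncidenceAlgebra K X)) :
    Submodule K (IncidenceAlgebra K X) :=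
  Submodule.span K {z | ∃ u ∈ U, ∃ v ∈ V, z = u * v - v * u}

/-- The span of products `u * a`, `u ∈ U`, `a` arbitrary. -/
def mulASpan (U : Submodule K (IncidenceAlgebra K X)) : Submodule K (IncidenceAlgebra K X) :=
  Submodule.span K {z | ∃ u ∈ U, ∃ a : IncidenceAlgebra K X, z = u * a}

/-- `J = Z_1`, the ideal of elements vanishing on the diagonal. -/
def jRad (K : Type*) [Field K] (X : Type*) [PartialOrder X] [LocallyFiniteOrder X]
    [DecidableEq X] : Submodule K (IncidenceAlgebra K X) where
  carrier := {f | ∀ x : X, f x x = 0}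
  add_mem' := fun hf hg x => by simp [IncidenceAlgebra.add_apply, hf x, hg x]
  zero_mem' := fun _ => rfl
  smul_mem' := fun c f hf x => by simp [IncidenceAlgebra.constSMul_apply, hf x]

/-- The lower central series `γ₁ = I`, `γ_{n+1} = [γ_n, I]` (indexed from `0`, so that
`lowerCentralSeriesSub I n` is `γ_{n+1}`). -/
def lowerCentralSeriesSub (I : Submodule K (IncidenceAlgebra K X)) :
    ℕ → Submodule K (IncidenceAlgebra K X)
  | 0 => I
  | n + 1 => lieBracketSpan (lowerCentralSeriesSub I n) I

/-- The strong Lie derived series `I⁽⁰⁾ = I`, `I⁽ⁿ⁺¹⁾ = [I⁽ⁿ⁾, I⁽ⁿ⁾]·A`. -/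
def strongDerivedSeriesSub (I : Submodule K (IncidenceAlgebra K X)) :
    ℕ → Submodule K (IncidenceAlgebra K X)
  | 0 => I
  | n + 1 =>
      mulASpan (lieBracketSpan (strongDerivedSeriesSub I n) (strongDerivedSeriesSub I n))

set_option linter.unusedSectionVars false
set_option linter.unusedVariables false

lemma chainHeight_union_eq_lt {α : Type*} [Preorder α] (s t : Set α)
    (h : ∀ a ∈ s, ∀ b ∈ t, a < b) :
    (s ∪ t).chainHeight (· < ·) = s.chainHeight (· < ·) + t.chainHeight (· < ·) := by
  apply le_antisymm
  · rw [Set.chainHeight]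
    refine iSup_le fun c => ?_
    obtain ⟨c, hcs, hc⟩ := c
    have hcu : c = (c ∩ s) ∪ (c ∩ t) := by
      rw [← Set.inter_union_distrib_left, Set.inter_eq_left.2 hcs]
    calc c.encard = ((c ∩ s) ∪ (c ∩ t)).encard := by rw [← hcu]
    _ ≤ (c ∩ s).encard + (c ∩ t).encard := Set.encard_union_le _ _
    _ ≤ _ := add_le_add
        (Set.encard_le_chainHeight_of_isChain _ _ Set.inter_subset_right
          (hc.mono Set.inter_subset_left))
        (Set.encard_le_chainHeight_of_isChain _ _ Set.inter_subset_right
          (hc.mono Set.inter_subset_left))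
  · rw [Set.chainHeight, Set.chainHeight, Set.chainHeight]
    haveI : Nonempty {c : Set α // c ⊆ s ∧ IsChain (· < ·) c} :=
      ⟨⟨∅, Set.empty_subset _, Set.subsingleton_empty.isChain⟩⟩
    haveI : Nonempty {c : Set α // c ⊆ t ∧ IsChain (· < ·) c} :=
      ⟨⟨∅, Set.empty_subset _, Set.subsingleton_empty.isChain⟩⟩
    refine ENat.iSup_add_iSup_le fun c d => ?_
    obtain ⟨c, hcs, hc⟩ := c
    obtain ⟨d, hdt, hd⟩ := d
    have hdisj : Disjoint c d := Set.disjoint_left.2 fun w hwc hwd =>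
      lt_irrefl w (h w (hcs hwc) w (hdt hwd))
    rw [← Set.encard_union_eq hdisj]
    refine le_iSup_of_le ⟨c ∪ d, Set.union_subset_union hcs hdt, ?_⟩ le_rfl
    rintro p (hp | hp) q (hq | hq) hpq
    · exact hc hp hq hpq
    · exact Or.inl (h p (hcs hp) q (hdt hq))
    · exact Or.inr (h q (hcs hq) p (hdt hp))
    · exact hd hp hq hpq

lemma chainHeight_insert_lt {α : Type*} [Preorder α] (s : Set α) (a : α)
    (h : ∀ b ∈ s, a < b) :
    (insert a s).chainHeight (· < ·) = s.chainHeight (· < ·) + 1 := by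
  have h1 : ({a} : Set α).chainHeight (· < ·) = 1 := by
    rw [← Set.encard_eq_chainHeight_of_isChain _ Set.subsingleton_singleton.isChain,
      Set.encard_singleton]
  rw [Set.insert_eq, chainHeight_union_eq_lt _ _ (by simpa using h), add_comm, h1]

lemma enat_add_one_sub_one (a : ℕ∞) : a + 1 - 1 = a := by
  induction a using ENat.recTopCoe with
  | top => rfl
  | coe n => rw [← Nat.cast_one, ← ENat.coe_add, ← ENat.coe_sub]; simp

lemma intervalLength_add_le {x z y : X} (hxz : x ≤ z) (hzy : z ≤ y) :
    intervalLength x z + intervalLength z y ≤ intervalLength x y := by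
  have h1 : 1 ≤ (Set.Icc x z).chainHeight (· < ·) :=
    (Set.one_le_chainHeight_iff _ _).2 ⟨z, by simp [hxz]⟩
  have h2 : 1 ≤ (Set.Icc z y).chainHeight (· < ·) :=
    (Set.one_le_chainHeight_iff _ _).2 ⟨z, by simp [hzy]⟩
  obtain ⟨a, ha⟩ := le_iff_exists_add'.1 h1
  obtain ⟨b, hb⟩ := le_iff_exists_add'.1 h2
  have hins : (Set.Icc z y).chainHeight (· < ·) = (Set.Ioc z y).chainHeight (· < ·) + 1 := by
    rw [← Set.Ioc_insert_left hzy]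
    exact chainHeight_insert_lt _ _ (fun w hw => hw.1)
  have hunion : (Set.Icc x z).chainHeight (· < ·) + (Set.Ioc z y).chainHeight (· < ·)
      = (Set.Icc x z ∪ Set.Ioc z y).chainHeight (· < ·) :=
    (chainHeight_union_eq_lt _ _ (fun a ha b hb => lt_of_le_of_lt ha.2 hb.1)).symm
  have hsub : (Set.Icc x z ∪ Set.Ioc z y) ⊆ Set.Icc x y := by
    rintro w (hw | hw)
    · exact ⟨hw.1, hw.2.trans hzy⟩
    · exact ⟨hxz.trans hw.1.le, hw.2⟩
  have hmono := Set.chainHeight_mono (· < ·) _ _ hsub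
  have hIoc : (Set.Ioc z y).chainHeight (· < ·) = b := by
    have h := hins; rw [hb] at h
    calc (Set.Ioc z y).chainHeight (· < ·) = (Set.Ioc z y).chainHeight (· < ·) + 1 - 1 :=
          (enat_add_one_sub_one _).symm
    _ = b + 1 - 1 := by rw [← h]
    _ = b := enat_add_one_sub_one _
  have hle : a + 1 + b ≤ (Set.Icc x y).chainHeight (· < ·) := by
    calc a + 1 + b = (Set.Icc x z).chainHeight (· < ·) + (Set.Ioc z y).chainHeight (· < ·) := by
          rw [ha, hIoc]
    _ = (Set.Icc x z ∪ Set.Ioc z y).chainHeight (· < ·) := hunion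
    _ ≤ _ := hmono
  unfold intervalLength
  rw [ha, hb, enat_add_one_sub_one, enat_add_one_sub_one]
  calc a + b = a + b + 1 - 1 := (enat_add_one_sub_one _).symm
  _ ≤ (Set.Icc x y).chainHeight (· < ·) - 1 := by
      refine tsub_le_tsub_right ?_ 1
      calc a + b + 1 = a + 1 + b := by ring
      _ ≤ _ := hle

lemma mem_zSet_mul {k m : ℕ} (hk : 1 ≤ k) (hm : 1 ≤ m)
    {f g : IncidenceAlgebra K X} (hf : f ∈ zSet K X k) (hg : g ∈ zSet K X m) :
    f * g ∈ zSet K X (k + m) := by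
  intro x y hxy hlen
  rw [mul_apply]
  refine Finset.sum_eq_zero fun z hz => ?_
  rw [Finset.mem_Icc] at hz
  by_cases hfz : intervalLength x z ≤ (k : ℕ∞) - 1
  · rw [hf x z hz.1 hfz, zero_mul]
  · rw [hg z y hz.2 ?_, mul_zero]
    push_neg at hfz
    have hcast : (k : ℕ∞) - 1 = ((k - 1 : ℕ) : ℕ∞) := (ENat.coe_sub _ _).symm
    have hk' : (k : ℕ∞) ≤ intervalLength x z := by
      have h1 : ((k - 1 : ℕ) : ℕ∞) + 1 ≤ intervalLength x z :=
        Order.add_one_le_of_lt (hcast ▸ hfz)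
      have h2 : ((k - 1 : ℕ) : ℕ∞) + 1 = (k : ℕ∞) := by
        norm_cast
        omega
      rwa [h2] at h1
    have hadd := intervalLength_add_le hz.1 hz.2
    have hky : intervalLength x y ≤ (k : ℕ∞) + ((m : ℕ∞) - 1) := by
      have h3 : ((k + m : ℕ) : ℕ∞) - 1 = (k : ℕ∞) + ((m : ℕ∞) - 1) := by
        norm_cast
        omega
      rwa [h3] at hlen
    have h4 : (k : ℕ∞) + intervalLength z y ≤ (k : ℕ∞) + ((m : ℕ∞) - 1) :=
      le_trans (add_le_add_left hk' _) (le_trans hadd hky)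
    exact (WithTop.add_le_add_iff_left (by simp : (k : ℕ∞) ≠ ⊤)).mp h4

/-- `zSet` as a submodule. -/
def zSubmodule (k : ℕ) : Submodule K (IncidenceAlgebra K X) where
  carrier := zSet K X k
  add_mem' := fun hf hg x y hxy hl => by
    simp [IncidenceAlgebra.add_apply, hf x y hxy hl, hg x y hxy hl]
  zero_mem' := fun _ _ _ _ => rfl
  smul_mem' := fun c f hf x y hxy hl => by
    simp [IncidenceAlgebra.constSMul_apply, hf x y hxy hl]

lemma intervalLength_mono_left {x z y : X} (hxz : x ≤ z) (hzy : z ≤ y) :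
    intervalLength x z ≤ intervalLength x y :=
  tsub_le_tsub_right (Set.chainHeight_mono (· < ·) _ _ (Set.Icc_subset_Icc_right hzy)) 1

lemma mem_zSet_mul_right {k : ℕ} {f : IncidenceAlgebra K X} (hf : f ∈ zSet K X k)
    (a : IncidenceAlgebra K X) : f * a ∈ zSet K X k := by
  intro x y hxy hl
  rw [mul_apply]
  refine Finset.sum_eq_zero fun z hz => ?_
  rw [Finset.mem_Icc] at hz
  rw [hf x z hz.1 (le_trans (intervalLength_mono_left hz.1 hz.2) hl), zero_mul]

lemma mulASpan_le_zSubmodule {k : ℕ} {U : Submodule K (IncidenceAlgebra K X)}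
    (h : (U : Set (IncidenceAlgebra K X)) ⊆ zSet K X k) :
    mulASpan U ≤ zSubmodule k := by
  rw [mulASpan, Submodule.span_le]
  rintro w ⟨u, hu, a, rfl⟩
  exact mem_zSet_mul_right (h hu) a

lemma lieBracketSpan_le_zSubmodule {k : ℕ} (hk : 1 ≤ k)
    {U V : Submodule K (IncidenceAlgebra K X)}
    (hU : (U : Set (IncidenceAlgebra K X)) ⊆ zSet K X k)
    (hV : (V : Set (IncidenceAlgebra K X)) ⊆ zSet K X k) :
    lieBracketSpan U V ≤ zSubmodule (k + k) := by
  rw [lieBracketSpan, Submodule.span_le]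
  rintro w ⟨u, hu, v, hv, rfl⟩
  have h1 : u * v ∈ zSubmodule (K := K) (X := X) (k + k) := mem_zSet_mul hk hk (hU hu) (hV hv)
  have h2 : v * u ∈ zSubmodule (K := K) (X := X) (k + k) := mem_zSet_mul hk hk (hV hv) (hU hu)
  exact sub_mem h1 h2

lemma jRad_subset_zSet_one :
    ((jRad K X : Submodule K (IncidenceAlgebra K X)) : Set (IncidenceAlgebra K X))
      ⊆ zSet K X 1 := by
  intro f hf x y hxy hl
  have hxy' : x = y := by
    by_contra hne
    have hlt : x < y := lt_of_le_of_ne hxy hne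
    have h2 : (2 : ℕ∞) ≤ (Set.Icc x y).chainHeight (· < ·) := by
      rw [← Set.encard_pair hne]
      refine Set.encard_le_chainHeight_of_isChain _ _ (by simp [Set.insert_subset_iff, hxy]) ?_
      intro a ha b hb hab
      rcases ha with rfl | rfl <;> rcases hb with rfl | rfl <;> simp_all
    have : (1 : ℕ∞) ≤ intervalLength x y := by
      unfold intervalLength
      calc (1:ℕ∞) = 2 - 1 := by decide
      _ ≤ _ := tsub_le_tsub_right h2 1
    simp only [Nat.cast_one, tsub_self] at hl
    exact absurd (le_trans this hl) (by simp)
  subst hxy'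
  exact hf x


/-- `J⁽ⁿ⁾ ⊆ Z_{2^n}` for all `n ≥ 0`, where `J⁽⁰⁾ = J` and
`J⁽ⁿ⁺¹⁾ = [J⁽ⁿ⁾, J⁽ⁿ⁾]·I(X,K)`. -/
theorem strongDerivedSeries_jRad_subset_zSet (n : ℕ) :
    (strongDerivedSeriesSub (jRad K X) n : Set (IncidenceAlgebra K X)) ⊆ zSet K X (2 ^ n) := by
  induction n with
  | zero => simpa [strongDerivedSeriesSub] using jRad_subset_zSet_one
  | succ n ih =>
    have h1 : (1 : ℕ) ≤ 2 ^ n := Nat.one_le_two_pow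
    have hlie := lieBracketSpan_le_zSubmodule h1 ih ih
    have hfin := mulASpan_le_zSubmodule (k := 2 ^ n + 2 ^ n) (fun w hw => hlie hw)
    intro w hw
    have h2 : (2 : ℕ) ^ (n + 1) = 2 ^ n + 2 ^ n := by ring
    rw [h2]
    exact hfin hw
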